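/- arXiv:0901.0623 — 2 statements merged into one kernel-verified Lean document; each statement's English description precedes it below -/
import Mathlib

section
/- Let ν be the measure on ℝ² supported on E = ([0,∞)×{0}) ∪ ({0}×[0,∞)) with densities (4/π)·u/((1-u)²(1+u)²) on the horizontal axis and (4/π)·v/(1+v²)² on the vertical axis. For 0 < ε ≤ 1: ∫_{|y₁−1|≥ε} (y₁−1) dν(y) = (1/π)·log((2+ε)/(2−ε)) − (4/π)·ε/(4−ε²), and for ε > 1: ∫_{|y₁−1|≥ε} (y₁−1) dν(y) = (1/π)·log((2+ε)/ε) + (2/π)·1/(2+ε). -/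
/-!
Both densities have elementary primitives vanishing at `+∞`: on the horizontal axis
`F u = (log |u - 1| - log |u + 1|) / π - 2 / (π (u + 1))`, on the vertical axis
`G v = 2 / (π (1 + v²))`. For `ε ≤ 1` the region `|u - 1| ≥ ε` consists of `[0, 1 - ε]` and
`[1 + ε, ∞)` on the horizontal axis together with the whole vertical axis, so the integral is
`F (1 - ε) - F 0 - F (1 + ε) - G 0`, in which `-F 0 = 2 / π` cancels `-G 0`. For `ε > 1` only
`[1 + ε, ∞)` is left, and the integral is `-F (1 + ε)`.
-/

open MeasureTheory Set Filter Real Topology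

section HorizontalAxis

/-- `Real.log` is even, so this is a primitive of the horizontal integrand on each of the
intervals cut out by `-1` and `1`. -/
noncomputable def horizontalPrimitive (u : ℝ) : ℝ :=
  (1 / π) * (log (u - 1) - log (u + 1)) - (2 / π) * (u + 1)⁻¹

lemma hasDerivAt_horizontalPrimitive {u : ℝ} (h₁ : u ≠ 1) (h₂ : u ≠ -1) :
    HasDerivAt horizontalPrimitive ((u - 1) * ((4 / π) * u / ((1 - u) ^ 2 * (1 + u) ^ 2))) u := by
  have hsub : u - 1 ≠ 0 := sub_ne_zero.mpr h₁
  have hadd : u + 1 ≠ 0 := by rwa [← sub_neg_eq_add, sub_ne_zero]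
  have hlog₁ := ((hasDerivAt_id' u).sub_const 1).log hsub
  have hlog₂ := ((hasDerivAt_id' u).add_const 1).log hadd
  have hinv := ((hasDerivAt_id' u).add_const 1).inv hadd
  refine (((hlog₁.sub hlog₂).const_mul (1 / π)).sub (hinv.const_mul (2 / π))).congr_deriv ?_
  have h₃ : 1 - u ≠ 0 := fun h => hsub (by linarith)
  have h₄ : 1 + u ≠ 0 := fun h => hadd (by linarith)
  field_simp [pi_ne_zero]
  ring

lemma tendsto_horizontalPrimitive_atTop : Tendsto horizontalPrimitive atTop (𝓝 0) := by
  have hlog : Tendsto (fun u : ℝ => log (u - 1) - log (u + 1)) atTop (𝓝 0) := by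
    simpa [sub_eq_add_neg] using
      (tendsto_log_comp_add_sub_log (-1)).sub (tendsto_log_comp_add_sub_log 1)
  have hinv : Tendsto (fun u : ℝ => (u + 1)⁻¹) atTop (𝓝 0) :=
    tendsto_inv_atTop_zero.comp (tendsto_atTop_add_const_right _ 1 tendsto_id)
  have h := (hlog.const_mul (1 / π)).sub (hinv.const_mul (2 / π))
  rwa [mul_zero, mul_zero, sub_zero] at h

lemma horizontal_integrand_nonneg {u : ℝ} (hu : 1 ≤ u) :
    0 ≤ (u - 1) * ((4 / π) * u / ((1 - u) ^ 2 * (1 + u) ^ 2)) := by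
  have := pi_pos
  exact mul_nonneg (by linarith) (div_nonneg (by positivity) (by positivity))

lemma integrableOn_Ioi_horizontal {a : ℝ} (ha : 1 < a) :
    IntegrableOn (fun u => (u - 1) * ((4 / π) * u / ((1 - u) ^ 2 * (1 + u) ^ 2))) (Ioi a) :=
  integrableOn_Ioi_deriv_of_nonneg'
    (fun x (hx : a ≤ x) => hasDerivAt_horizontalPrimitive (by linarith) (by linarith))
    (fun x (hx : a < x) => horizontal_integrand_nonneg (by linarith))
    tendsto_horizontalPrimitive_atTop

lemma integral_Ioi_horizontal {a : ℝ} (ha : 1 < a) :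
    ∫ u in Ioi a, (u - 1) * ((4 / π) * u / ((1 - u) ^ 2 * (1 + u) ^ 2)) =
      -horizontalPrimitive a := by
  rw [integral_Ioi_of_hasDerivAt_of_nonneg'
    (fun x (hx : a ≤ x) => hasDerivAt_horizontalPrimitive (by linarith) (by linarith))
    (fun x (hx : a < x) => horizontal_integrand_nonneg (by linarith))
    tendsto_horizontalPrimitive_atTop, zero_sub]

lemma continuousOn_horizontal_Icc {a b : ℝ} (ha : -1 < a) (hb : b < 1) :
    ContinuousOn (fun u => (u - 1) * ((4 / π) * u / ((1 - u) ^ 2 * (1 + u) ^ 2))) (Icc a b) := by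
  refine ContinuousOn.mul (by fun_prop) (ContinuousOn.div (by fun_prop) (by fun_prop) ?_)
  rintro x ⟨hax, hxb⟩
  have h₁ : 1 - x ≠ 0 := by linarith
  have h₂ : 1 + x ≠ 0 := by linarith
  positivity

lemma integral_Icc_horizontal {a b : ℝ} (ha : -1 < a) (hab : a ≤ b) (hb : b < 1) :
    ∫ u in Icc a b, (u - 1) * ((4 / π) * u / ((1 - u) ^ 2 * (1 + u) ^ 2)) =
      horizontalPrimitive b - horizontalPrimitive a := by
  rw [integral_Icc_eq_integral_Ioc, ← intervalIntegral.integral_of_le hab]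
  refine intervalIntegral.integral_eq_sub_of_hasDerivAt (fun x hx => ?_) ?_
  · rw [uIcc_of_le hab] at hx
    exact hasDerivAt_horizontalPrimitive (by linarith [hx.2]) (by linarith [hx.1])
  · exact (continuousOn_horizontal_Icc ha hb).intervalIntegrable_of_Icc hab

lemma setOf_nonneg_and_le_abs_sub_one {ε : ℝ} (hε : 0 ≤ ε) :
    {u : ℝ | 0 ≤ u ∧ ε ≤ |u - 1|} = Icc 0 (1 - ε) ∪ Ici (1 + ε) := by
  ext u
  simp only [mem_ofPred_eq, mem_union, mem_Icc, mem_Ici, le_abs]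
  constructor
  · rintro ⟨hu, h | h⟩
    · exact Or.inr (by linarith)
    · exact Or.inl ⟨hu, by linarith⟩
  · rintro (⟨hu, h⟩ | h)
    · exact ⟨hu, Or.inr (by linarith)⟩
    · exact ⟨by linarith, Or.inl (by linarith)⟩

lemma integral_horizontal_far_from_one {ε : ℝ} (hε : 0 < ε) :
    ∫ u in {u : ℝ | 0 ≤ u ∧ ε ≤ |u - 1|},
        (u - 1) * ((4 / π) * u / ((1 - u) ^ 2 * (1 + u) ^ 2)) =
      (∫ u in Icc 0 (1 - ε), (u - 1) * ((4 / π) * u / ((1 - u) ^ 2 * (1 + u) ^ 2))) -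
        horizontalPrimitive (1 + ε) := by
  have hdisj : Disjoint (Icc 0 (1 - ε)) (Ici (1 + ε)) :=
    disjoint_left.mpr fun x hx₁ hx₂ => by linarith [hx₁.2, mem_Ici.mp hx₂]
  rw [setOf_nonneg_and_le_abs_sub_one hε.le, setIntegral_union hdisj measurableSet_Ici
    (continuousOn_horizontal_Icc (by norm_num) (by linarith)).integrableOn_Icc
    ((integrableOn_Ici_iff_integrableOn_Ioi).mpr (integrableOn_Ioi_horizontal (by linarith))),
    integral_Ici_eq_integral_Ioi, integral_Ioi_horizontal (by linarith), ← sub_eq_add_neg]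

lemma horizontalPrimitive_zero : horizontalPrimitive 0 = -(2 / π) := by
  simp [horizontalPrimitive]

lemma horizontalPrimitive_one_sub {ε : ℝ} (hε : 0 < ε) (hε₂ : ε < 2) :
    horizontalPrimitive (1 - ε) = (1 / π) * log (ε / (2 - ε)) - (2 / π) * (1 / (2 - ε)) := by
  rw [horizontalPrimitive, log_div hε.ne' (by linarith), sub_sub_cancel_left, log_neg_eq_log,
    show 1 - ε + 1 = 2 - ε by ring]
  ring

lemma neg_horizontalPrimitive_one_add {ε : ℝ} (hε : 0 < ε) :
    -horizontalPrimitive (1 + ε) = (1 / π) * log ((2 + ε) / ε) + (2 / π) * (1 / (2 + ε)) := by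
  rw [horizontalPrimitive, log_div (by positivity) hε.ne', add_sub_cancel_left,
    show 1 + ε + 1 = 2 + ε by ring]
  ring

end HorizontalAxis

section VerticalAxis

noncomputable def verticalPrimitive (v : ℝ) : ℝ := (2 / π) * (1 + v ^ 2)⁻¹

lemma hasDerivAt_verticalPrimitive (v : ℝ) :
    HasDerivAt verticalPrimitive (((0 : ℝ) - 1) * ((4 / π) * v / (1 + v ^ 2) ^ 2)) v := by
  have hsq : HasDerivAt (fun v : ℝ => 1 + v ^ 2) (2 * v) v := by
    simpa using (hasDerivAt_pow 2 v).const_add 1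
  refine ((hsq.inv (by positivity)).const_mul (2 / π)).congr_deriv ?_
  field_simp [pi_ne_zero]
  ring

lemma tendsto_verticalPrimitive_atTop : Tendsto verticalPrimitive atTop (𝓝 0) := by
  have hinv : Tendsto (fun v : ℝ => (1 + v ^ 2)⁻¹) atTop (𝓝 0) :=
    tendsto_inv_atTop_zero.comp
      (tendsto_atTop_add_const_left _ 1 (tendsto_pow_atTop two_ne_zero))
  have h := hinv.const_mul (2 / π)
  rwa [mul_zero] at h

lemma integral_Ioi_zero_vertical :
    ∫ v in Ioi (0 : ℝ), ((0 : ℝ) - 1) * ((4 / π) * v / (1 + v ^ 2) ^ 2) = -(2 / π) := by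
  have hnonpos (v : ℝ) (hv : v ∈ Ioi (0 : ℝ)) :
      ((0 : ℝ) - 1) * ((4 / π) * v / (1 + v ^ 2) ^ 2) ≤ 0 := by
    have := pi_pos
    have : 0 ≤ (4 / π) * v / (1 + v ^ 2) ^ 2 := by have : 0 < v := hv; positivity
    linarith
  rw [integral_Ioi_of_hasDerivAt_of_nonpos' (fun v _ => hasDerivAt_verticalPrimitive v) hnonpos
    tendsto_verticalPrimitive_atTop]
  simp [verticalPrimitive]

end VerticalAxis

/-- With ν on E = ([0,∞)×{0}) ∪ ({0}×[0,∞)) having densities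
`(4/π)·u/((1-u)²(1+u)²)` on the horizontal axis and `(4/π)·v/(1+v²)²` on the
vertical axis (where y₁ = 0, so |y₁−1| = 1), the integral
`∫_{|y₁−1|≥ε} (y₁−1) dν(y)` equals the stated expressions for `0 < ε ≤ 1`
and for `ε > 1`. -/
theorem stmt5 (ε : ℝ) (hε : 0 < ε) :
    (ε ≤ 1 →
      (∫ u in {u : ℝ | 0 ≤ u ∧ ε ≤ |u - 1|},
          (u - 1) * ((4 / Real.pi) * u / ((1 - u) ^ 2 * (1 + u) ^ 2)))
      + (∫ v in {v : ℝ | 0 ≤ v ∧ ε ≤ |(0 : ℝ) - 1|},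
          ((0 : ℝ) - 1) * ((4 / Real.pi) * v / (1 + v ^ 2) ^ 2))
        = (1 / Real.pi) * Real.log ((2 + ε) / (2 - ε))
          - (4 / Real.pi) * (ε / (4 - ε ^ 2))) ∧
    (1 < ε →
      (∫ u in {u : ℝ | 0 ≤ u ∧ ε ≤ |u - 1|},
          (u - 1) * ((4 / Real.pi) * u / ((1 - u) ^ 2 * (1 + u) ^ 2)))
      + (∫ v in {v : ℝ | 0 ≤ v ∧ ε ≤ |(0 : ℝ) - 1|},
          ((0 : ℝ) - 1) * ((4 / Real.pi) * v / (1 + v ^ 2) ^ 2))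
        = (1 / Real.pi) * Real.log ((2 + ε) / ε)
          + (2 / Real.pi) * (1 / (2 + ε))) := by
  have habs : |(0 : ℝ) - 1| = 1 := by norm_num
  rw [integral_horizontal_far_from_one hε, sub_eq_add_neg, neg_horizontalPrimitive_one_add hε, habs]
  refine ⟨fun hε₁ => ?_, fun hε₁ => ?_⟩
  · have hvert : {v : ℝ | 0 ≤ v ∧ ε ≤ 1} = Ici 0 := by ext; simp [hε₁]
    rw [hvert, integral_Ici_eq_integral_Ioi, integral_Ioi_zero_vertical,
      integral_Icc_horizontal (by norm_num) (by linarith) (by linarith),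
      horizontalPrimitive_one_sub hε (by linarith), horizontalPrimitive_zero,
      log_div hε.ne' (by linarith), log_div (by positivity) hε.ne',
      log_div (by positivity) (by linarith), show 4 - ε ^ 2 = (2 - ε) * (2 + ε) by ring]
    have h₂ : 2 - ε ≠ 0 := by linarith
    field_simp [pi_ne_zero]
    ring
  · have hvert : {v : ℝ | 0 ≤ v ∧ ε ≤ 1} = ∅ := by ext; simp [hε₁]
    rw [hvert, Icc_eq_empty (by linarith)]
    simp
end

section
/- Let ν be the measure on E with densities (4/π)·u/((1-u)²(1+u)²) on the horizontal axis and (4/π)·v/(1+v²)² on the vertical axis. For every p ∈ (1,2), the p-th moment m_p := ∫_E |y₁−1|^p dν(y) is finite and satisfies m_p ≤ (4/π)·(p²−2p+2)/(p(p−1)(2−p)). -/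
/-!
On the vertical axis `|y₁ - 1| = 1`, and `v / (1 + v²)²` has the antiderivative
`-1 / (2 (1 + v²))`, so that axis contributes `(4/π) / 2`. On the horizontal axis the factor
`(1 - u)²` of the density cancels against `|u - 1| ^ p`, leaving
`|u - 1| ^ (p - 2) · u / (1 + u)²`.
Bounding `u / (1 + u)² ≤ 1/4` on `[0, 2]` and the whole integrand by `u ^ (p - 3)` on `(2, ∞)`
gives at most `1 / (2 (p - 1)) + 2 ^ (p - 2) / (2 - p)`. Bernoulli's inequality `2 ^ (p - 1) ≤ p`
then leaves a slack of `(p - 2)² / (2 p (p - 1) (2 - p))` in the claimed bound.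
-/

open MeasureTheory Set Filter Topology

section Vertical

lemma hasDerivAt_neg_inv_two_mul_one_add_sq (v : ℝ) :
    HasDerivAt (fun v : ℝ => -(2 * (1 + v ^ 2))⁻¹) (v / (1 + v ^ 2) ^ 2) v := by
  have h : HasDerivAt (fun v : ℝ => 2 * (1 + v ^ 2)) (2 * (2 * v)) v := by
    simpa using ((hasDerivAt_pow 2 v).const_add 1).const_mul 2
  refine ((h.fun_inv (by positivity)).fun_neg).congr_deriv ?_
  field_simp

lemma tendsto_neg_inv_two_mul_one_add_sq :
    Tendsto (fun v : ℝ => -(2 * (1 + v ^ 2))⁻¹) atTop (𝓝 0) := by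
  have h : Tendsto (fun v : ℝ => 2 * (1 + v ^ 2)) atTop atTop :=
    (tendsto_atTop_add_const_left _ _ (tendsto_pow_atTop two_ne_zero)).const_mul_atTop two_pos
  simpa using h.inv_tendsto_atTop.neg

lemma integrableOn_div_one_add_sq_sq :
    IntegrableOn (fun v : ℝ => v / (1 + v ^ 2) ^ 2) (Ioi 0) :=
  integrableOn_Ioi_deriv_of_nonneg' (fun v _ => hasDerivAt_neg_inv_two_mul_one_add_sq v)
    (fun v hv => div_nonneg (le_of_lt hv) (by positivity)) tendsto_neg_inv_two_mul_one_add_sq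

lemma integral_div_one_add_sq_sq : ∫ v in Ioi (0 : ℝ), v / (1 + v ^ 2) ^ 2 = 1 / 2 := by
  rw [integral_Ioi_of_hasDerivAt_of_nonneg' (fun v _ => hasDerivAt_neg_inv_two_mul_one_add_sq v)
    (fun v hv => div_nonneg (le_of_lt hv) (by positivity)) tendsto_neg_inv_two_mul_one_add_sq]
  norm_num

end Vertical

section AbsRpow

variable {r a : ℝ}

lemma intervalIntegrable_abs_rpow_zero_left (hr : -1 < r) (ha : 0 ≤ a) :
    IntervalIntegrable (fun x : ℝ => |x| ^ r) volume 0 a :=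
  (intervalIntegral.intervalIntegrable_rpow' hr).congr fun x hx => by
    rw [uIoc_of_le ha] at hx
    rw [abs_of_pos hx.1]

lemma integral_abs_rpow_zero_left (hr : -1 < r) (ha : 0 ≤ a) :
    ∫ x in (0 : ℝ)..a, |x| ^ r = a ^ (r + 1) / (r + 1) := by
  rw [intervalIntegral.integral_congr (g := fun x : ℝ => x ^ r) fun x hx => by
      rw [uIcc_of_le ha] at hx
      rw [abs_of_nonneg hx.1],
    integral_rpow (Or.inl hr), Real.zero_rpow (by linarith), sub_zero]

lemma intervalIntegrable_abs_rpow (hr : -1 < r) (ha : 0 ≤ a) :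
    IntervalIntegrable (fun x : ℝ => |x| ^ r) volume (-a) a := by
  have h := intervalIntegrable_abs_rpow_zero_left hr ha
  refine IntervalIntegrable.trans ?_ h
  simpa using ((IntervalIntegrable.iff_comp_neg).mp h).symm

lemma integral_abs_rpow (hr : -1 < r) (ha : 0 ≤ a) :
    ∫ x in -a..a, |x| ^ r = 2 * a ^ (r + 1) / (r + 1) := by
  have h := intervalIntegrable_abs_rpow_zero_left hr ha
  have hneg : ∫ x in -a..0, |x| ^ r = ∫ x in (0 : ℝ)..a, |x| ^ r := by
    simpa using (intervalIntegral.integral_comp_neg (a := 0) (b := a) fun x : ℝ => |x| ^ r).symm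
  rw [← intervalIntegral.integral_add_adjacent_intervals
    (by simpa using ((IntervalIntegrable.iff_comp_neg).mp h).symm) h, hneg,
    integral_abs_rpow_zero_left hr ha]
  ring

lemma integrableOn_abs_sub_rpow_Icc (hr : -1 < r) (c : ℝ) (ha : 0 ≤ a) :
    IntegrableOn (fun u : ℝ => |u - c| ^ r) (Icc (c - a) (c + a)) := by
  have h := (intervalIntegrable_abs_rpow hr ha).comp_sub_right c
  rw [intervalIntegrable_iff_integrableOn_Icc_of_le (by linarith), neg_add_eq_sub,
    add_comm a c] at h
  exact h

lemma setIntegral_abs_sub_rpow_Icc (hr : -1 < r) (c : ℝ) (ha : 0 ≤ a) :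
    ∫ u in Icc (c - a) (c + a), |u - c| ^ r = 2 * a ^ (r + 1) / (r + 1) := by
  rw [integral_Icc_eq_integral_Ioc, ← intervalIntegral.integral_of_le (by linarith),
    intervalIntegral.integral_comp_sub_right (fun x : ℝ => |x| ^ r) c, sub_sub_cancel_left,
    add_sub_cancel_left, integral_abs_rpow hr ha]

end AbsRpow

section Horizontal

noncomputable def reducedIntegrand (p u : ℝ) : ℝ := |u - 1| ^ (p - 2) * (u / (1 + u) ^ 2)

variable {p : ℝ}

lemma abs_sub_one_rpow_mul_eq_reducedIntegrand (hp : p ≠ 2) (c u : ℝ) :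
    |u - 1| ^ p * (c * u / ((1 - u) ^ 2 * (1 + u) ^ 2)) = c * reducedIntegrand p u := by
  rcases eq_or_ne u 1 with rfl | hu
  -- at `u = 1` the left side is `0` only through the convention `x / 0 = 0`
  · simp [reducedIntegrand, Real.zero_rpow (sub_ne_zero.2 hp)]
  have hpos : 0 < |u - 1| := abs_pos.2 (sub_ne_zero.2 hu)
  have hsplit : |u - 1| ^ p = |u - 1| ^ (p - 2) * (1 - u) ^ 2 := by
    rw [← sq_abs, abs_sub_comm 1 u, ← Real.rpow_two, ← Real.rpow_add hpos, sub_add_cancel]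
  have h1u : (1 - u) ^ 2 ≠ 0 := pow_ne_zero 2 (sub_ne_zero.2 hu.symm)
  rw [hsplit, reducedIntegrand, mul_assoc, mul_div_assoc', mul_div_mul_left _ _ h1u]
  ring

lemma div_one_add_sq_le_quarter (u : ℝ) : u / (1 + u) ^ 2 ≤ 1 / 4 := by
  rcases eq_or_ne (1 + u) 0 with h | h
  · simp [h]
  rw [div_le_iff₀ (by positivity)]
  nlinarith [sq_nonneg (1 - u)]

lemma reducedIntegrand_nonneg {u : ℝ} (hu : 0 ≤ u) : 0 ≤ reducedIntegrand p u := by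
  unfold reducedIntegrand
  positivity

lemma reducedIntegrand_le_quarter_mul (p u : ℝ) :
    reducedIntegrand p u ≤ 1 / 4 * |u - 1| ^ (p - 2) := by
  rw [reducedIntegrand, mul_comm]
  exact mul_le_mul_of_nonneg_right (div_one_add_sq_le_quarter u) (by positivity)

lemma reducedIntegrand_le_rpow {u : ℝ} (hp : 1 ≤ p) (hu : 2 ≤ u) :
    reducedIntegrand p u ≤ u ^ (p - 3) := by
  have hu0 : 0 < u := by linarith
  have hu1 : 0 < u - 1 := by linarith
  have hfactor : u / ((u - 1) * (1 + u) ^ 2) ≤ 1 / u ^ 2 := by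
    rw [div_le_div_iff₀ (by positivity) (by positivity)]
    nlinarith
  calc reducedIntegrand p u = (u - 1) ^ (p - 1) * (u / ((u - 1) * (1 + u) ^ 2)) := by
        rw [reducedIntegrand, abs_of_pos hu1, show p - 2 = p - 1 - 1 by ring,
          Real.rpow_sub_one hu1.ne', div_mul_div_comm, mul_div_assoc]
    _ ≤ u ^ (p - 1) * (1 / u ^ 2) :=
        mul_le_mul (Real.rpow_le_rpow hu1.le (by linarith) (by linarith)) hfactor
          (by positivity) (by positivity)
    _ = u ^ (p - 3) := by
        rw [show p - 3 = p - 1 - 2 by ring, Real.rpow_sub hu0 (p - 1) 2, Real.rpow_two]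
        ring

lemma measurable_reducedIntegrand (p : ℝ) : Measurable (reducedIntegrand p) := by
  unfold reducedIntegrand
  fun_prop

lemma integrableOn_quarter_mul_abs_sub_one_rpow (hp : 1 < p) :
    IntegrableOn (fun u : ℝ => 1 / 4 * |u - 1| ^ (p - 2)) (Icc 0 2) := by
  have h := integrableOn_abs_sub_rpow_Icc (r := p - 2) (by linarith) 1 zero_le_one
  norm_num at h
  exact h.const_mul _

lemma integrableOn_reducedIntegrand_Icc (hp : 1 < p) :
    IntegrableOn (reducedIntegrand p) (Icc 0 2) :=
  integrable_of_le_of_le (measurable_reducedIntegrand p).aestronglyMeasurable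
    (ae_restrict_of_forall_mem measurableSet_Icc fun _ hu => reducedIntegrand_nonneg hu.1)
    (ae_restrict_of_forall_mem measurableSet_Icc fun u _ => reducedIntegrand_le_quarter_mul p u)
    (integrable_zero _ _ _) (integrableOn_quarter_mul_abs_sub_one_rpow hp)

lemma setIntegral_reducedIntegrand_Icc_le (hp : 1 < p) :
    ∫ u in Icc (0 : ℝ) 2, reducedIntegrand p u ≤ 1 / (2 * (p - 1)) := by
  refine (setIntegral_mono_on (integrableOn_reducedIntegrand_Icc hp)
    (integrableOn_quarter_mul_abs_sub_one_rpow hp) measurableSet_Icc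
    fun u _ => reducedIntegrand_le_quarter_mul p u).trans_eq ?_
  have h := setIntegral_abs_sub_rpow_Icc (r := p - 2) (by linarith) 1 zero_le_one
  norm_num at h
  have hp1 : p - 1 ≠ 0 := sub_ne_zero.2 hp.ne'
  rw [integral_const_mul, h, show p - 2 + 1 = p - 1 by ring]
  field_simp
  ring

lemma integrableOn_reducedIntegrand_Ioi (hp1 : 1 ≤ p) (hp2 : p < 2) :
    IntegrableOn (reducedIntegrand p) (Ioi 2) :=
  integrable_of_le_of_le (measurable_reducedIntegrand p).aestronglyMeasurable
    (ae_restrict_of_forall_mem measurableSet_Ioi fun _ hu =>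
      reducedIntegrand_nonneg (zero_le_two.trans (le_of_lt hu)))
    (ae_restrict_of_forall_mem measurableSet_Ioi fun _ hu =>
      reducedIntegrand_le_rpow hp1 (le_of_lt hu))
    (integrable_zero _ _ _) (integrableOn_Ioi_rpow_of_lt (by linarith) two_pos)

lemma setIntegral_reducedIntegrand_Ioi_le (hp1 : 1 ≤ p) (hp2 : p < 2) :
    ∫ u in Ioi (2 : ℝ), reducedIntegrand p u ≤ 2 ^ (p - 2) / (2 - p) := by
  refine (setIntegral_mono_on (integrableOn_reducedIntegrand_Ioi hp1 hp2)
    (integrableOn_Ioi_rpow_of_lt (by linarith) two_pos) measurableSet_Ioi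
    fun _ hu => reducedIntegrand_le_rpow hp1 (le_of_lt hu)).trans_eq ?_
  rw [integral_Ioi_rpow_of_lt (by linarith) two_pos, show p - 3 + 1 = -(2 - p) by ring,
    show p - 2 = -(2 - p) by ring, neg_div_neg_eq]

lemma integrableOn_reducedIntegrand (hp1 : 1 < p) (hp2 : p < 2) :
    IntegrableOn (reducedIntegrand p) (Ici 0) := by
  rw [← Icc_union_Ioi_eq_Ici zero_le_two]
  exact (integrableOn_reducedIntegrand_Icc hp1).union
    (integrableOn_reducedIntegrand_Ioi hp1.le hp2)

lemma setIntegral_reducedIntegrand_le (hp1 : 1 < p) (hp2 : p < 2) :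
    ∫ u in Ici (0 : ℝ), reducedIntegrand p u ≤ 1 / (2 * (p - 1)) + 2 ^ (p - 2) / (2 - p) := by
  rw [← Icc_union_Ioi_eq_Ici zero_le_two,
    setIntegral_union ((Iic_disjoint_Ioi le_rfl).mono_left Icc_subset_Iic_self) measurableSet_Ioi
      (integrableOn_reducedIntegrand_Icc hp1) (integrableOn_reducedIntegrand_Ioi hp1.le hp2)]
  exact add_le_add (setIntegral_reducedIntegrand_Icc_le hp1)
    (setIntegral_reducedIntegrand_Ioi_le hp1.le hp2)

lemma two_rpow_sub_two_le (hp1 : 1 ≤ p) (hp2 : p ≤ 2) : (2 : ℝ) ^ (p - 2) ≤ p / 2 := by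
  have h := rpow_one_add_le_one_add_mul_self (s := 1) (by norm_num) (p := p - 1)
    (by linarith) (by linarith)
  rw [show p - 2 = p - 1 - 1 by ring, Real.rpow_sub_one two_ne_zero]
  norm_num at h
  linarith

lemma one_div_two_mul_sub_one_add_two_rpow_div_add_half_le (hp1 : 1 < p) (hp2 : p < 2) :
    1 / (2 * (p - 1)) + 2 ^ (p - 2) / (2 - p) + 1 / 2
      ≤ (p ^ 2 - 2 * p + 2) / (p * (p - 1) * (2 - p)) := by
  have h0 : 0 < p := by linarith
  have h1 : 0 < p - 1 := sub_pos.2 hp1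
  have h2 : 0 < 2 - p := sub_pos.2 hp2
  have hrpow : (2 : ℝ) ^ (p - 2) / (2 - p) ≤ p / 2 / (2 - p) :=
    div_le_div_of_nonneg_right (two_rpow_sub_two_le hp1.le hp2.le) h2.le
  have hslack : (p ^ 2 - 2 * p + 2) / (p * (p - 1) * (2 - p))
      - (1 / (2 * (p - 1)) + p / 2 / (2 - p) + 1 / 2)
      = (p - 2) ^ 2 / (2 * p * (p - 1) * (2 - p)) := by
    field_simp
    ring
  have : 0 ≤ (p - 2) ^ 2 / (2 * p * (p - 1) * (2 - p)) := by positivity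
  linarith

end Horizontal

/-- For `p ∈ (1,2)`, the p-th moment `m_p = ∫_E |y₁−1|^p dν(y)` (horizontal-axis
part with density `(4/π)·u/((1-u)²(1+u)²)`, vertical-axis part with density
`(4/π)·v/(1+v²)²` and `|y₁−1| = 1` there) is finite and satisfies
`m_p ≤ (4/π)·(p²−2p+2)/(p(p−1)(2−p))`. -/
theorem stmt8 (p : ℝ) (hp1 : 1 < p) (hp2 : p < 2) :
    IntegrableOn (fun u : ℝ =>
        |u - 1| ^ p * ((4 / Real.pi) * u / ((1 - u) ^ 2 * (1 + u) ^ 2)))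
      (Set.Ici 0) ∧
    IntegrableOn (fun v : ℝ =>
        |(0 : ℝ) - 1| ^ p * ((4 / Real.pi) * v / (1 + v ^ 2) ^ 2))
      (Set.Ici 0) ∧
    (∫ u in Set.Ici (0 : ℝ),
        |u - 1| ^ p * ((4 / Real.pi) * u / ((1 - u) ^ 2 * (1 + u) ^ 2)))
      + (∫ v in Set.Ici (0 : ℝ),
        |(0 : ℝ) - 1| ^ p * ((4 / Real.pi) * v / (1 + v ^ 2) ^ 2))
      ≤ (4 / Real.pi) * (p ^ 2 - 2 * p + 2) / (p * (p - 1) * (2 - p)) := by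
  have hhor : (fun u : ℝ => |u - 1| ^ p * ((4 / Real.pi) * u / ((1 - u) ^ 2 * (1 + u) ^ 2)))
      = fun u => 4 / Real.pi * reducedIntegrand p u :=
    funext (abs_sub_one_rpow_mul_eq_reducedIntegrand hp2.ne _)
  have hver : (fun v : ℝ => |(0 : ℝ) - 1| ^ p * ((4 / Real.pi) * v / (1 + v ^ 2) ^ 2))
      = fun v => 4 / Real.pi * (v / (1 + v ^ 2) ^ 2) := by
    funext v
    norm_num [mul_div_assoc]
  rw [hhor, hver]
  refine ⟨(integrableOn_reducedIntegrand hp1 hp2).const_mul _,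
    ((integrableOn_Ici_iff_integrableOn_Ioi).2 integrableOn_div_one_add_sq_sq).const_mul _, ?_⟩
  rw [integral_const_mul, integral_const_mul,
    integral_Ici_eq_integral_Ioi (f := fun v => v / (1 + v ^ 2) ^ 2),
    integral_div_one_add_sq_sq, ← mul_add, mul_div_assoc]
  exact mul_le_mul_of_nonneg_left
    ((add_le_add_left (setIntegral_reducedIntegrand_le hp1 hp2) _).trans
      (one_div_two_mul_sub_one_add_two_rpow_div_add_half_le hp1 hp2)) (by positivity)
end
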